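/- arXiv:1812.08074 — 3 statements merged into one kernel-verified Lean document; each statement's English description precedes it below -/
import Mathlib

section
/- Let (e_α) be a Q-orthonormal basis of m adapted to the decomposition (each e_α lies in some m_i), set d_i := dim m_i and [ijk] := Σ_{e_α∈m_i, e_β∈m_j} |⁅e_α,e_β⁆_{m_k}|²_Q. Suppose c_i ≥ 0 satisfies Σ_{e_α, e_{α'} ∈ m_i} |⁅e_α,e_{α'}⁆_𝔥|²_Q = d_i c_i, and define b_i by the relation d_i b_i = 2 d_i c_i + Σ_{j,k=1}^{ℓ} [ijk]. Then for every i, the Ricci trace identity holds: Σ_{j=1}^{ℓ} Σ_{e_α∈m_i, e_β∈m_j} K(e_α, e_β) = d_i b_i/(2λ_i) − (1/2) Σ_{j,k=1}^{ℓ} [ijk] λ_k/(λ_i λ_j) + (1/4) Σ_{j,k=1}^{ℓ} [ijk] λ_i/(λ_j λ_k). -/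
/-!
For `X ∈ m_i`, `Y ∈ m_j`, pairing the defining identity of `U` with `Z ∈ m_k` and using
ad-invariance gives `U(X,Y)_{m_k} = (λ_j - λ_i)/(2λ_k) ⁅X,Y⁆_{m_k}`, in particular `U(X,X) = 0`.
Substituting this into `K` turns `λ_i λ_j K(X,Y)` into a combination of `|⁅X,Y⁆_𝔥|²` and the
`|⁅X,Y⁆_{m_k}|²` whose coefficients depend only on `i, j, k`. Summing over the adapted bases, the
`𝔥`-part survives only for `j = i`, where it is the Casimir term, and the rest becomes
`Σ_{j,k} (coefficient) [ijk]`. Ad-invariance makes `[ijk]` symmetric in `j, k`, so the coefficient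
may be changed by any function antisymmetric in `j, k`, which brings it to the stated form.
-/

open scoped RealInnerProductSpace

variable {𝔤 : Type*} [NormedAddCommGroup 𝔤] [InnerProductSpace ℝ 𝔤] [FiniteDimensional ℝ 𝔤]

/-- The invariant metric `g` on `m = 𝔥ᗮ` determined by the orthogonal decomposition
`m = m_1 ⊕ ⋯ ⊕ m_ℓ` and the positive coefficients `λ_i`:  `g(X,Y) = λ_i Q(X,Y)` for
`X, Y ∈ m_i` and `g(m_i, m_j) = 0` for `i ≠ j`. -/
noncomputable def gmet {ℓ : ℕ} (m : Fin ℓ → Submodule ℝ 𝔤) (lam : Fin ℓ → ℝ) (x y : 𝔤) : ℝ :=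
  ∑ i, lam i * ⟪(Submodule.orthogonalProjectionOnto (m i) x : 𝔤), (Submodule.orthogonalProjectionOnto (m i) y : 𝔤)⟫

/-- The sectional curvature expression `K(X,Y)` for `X ∈ m_i`, `Y ∈ m_j`:
with `X̃ = X/√λ_i`, `Ỹ = Y/√λ_j`,
`K(X,Y) = −(3/4)|⁅X̃,Ỹ⁆_m|²_g − (1/2) g(⁅X̃,⁅X̃,Ỹ⁆⁆_m, Ỹ) − (1/2) g(⁅Ỹ,⁅Ỹ,X̃⁆⁆_m, X̃)
  + |U(X̃,Ỹ)|²_g − g(U(X̃,X̃), U(Ỹ,Ỹ))`. -/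
noncomputable def Kcurv {ℓ : ℕ} (𝔥 : Submodule ℝ 𝔤) (m : Fin ℓ → Submodule ℝ 𝔤)
    (lam : Fin ℓ → ℝ) (L : 𝔤 →ₗ[ℝ] 𝔤 →ₗ[ℝ] 𝔤) (U : 𝔤 → 𝔤 → 𝔤) (i j : Fin ℓ) (X Y : 𝔤) : ℝ :=
  let Xt := (Real.sqrt (lam i))⁻¹ • X;
  let Yt := (Real.sqrt (lam j))⁻¹ • Y;
  let Pm : 𝔤 → 𝔤 := (fun z => (Submodule.orthogonalProjectionOnto 𝔥ᗮ z : 𝔤));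
  -(3/4) * gmet m lam (Pm (L Xt Yt)) (Pm (L Xt Yt))
    - (1/2) * gmet m lam (Pm (L Xt (L Xt Yt))) Yt
    - (1/2) * gmet m lam (Pm (L Yt (L Yt Xt))) Xt
    + gmet m lam (U Xt Yt) (U Xt Yt)
    - gmet m lam (U Xt Xt) (U Yt Yt)

section InnerProductSpace

variable {E : Type*} [NormedAddCommGroup E] [InnerProductSpace ℝ E]

theorem Submodule.inner_starProjection_eq_of_mem_right {K : Submodule ℝ E}
    [K.HasOrthogonalProjection] {y : E} (hy : y ∈ K) (v : E) :
    ⟪K.starProjection v, y⟫ = ⟪v, y⟫ := by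
  rw [K.inner_starProjection_left_eq_right, K.starProjection_eq_self_iff.mpr hy]

theorem norm_sq_starProjection_eq_sum_sq_inner {ι : Type*} [Fintype ι] {K : Submodule ℝ E}
    [K.HasOrthogonalProjection] {f : ι → E} (hf : Orthonormal ℝ f)
    (hspan : Submodule.span ℝ (Set.range f) = K) (z : E) :
    ‖K.starProjection z‖ ^ 2 = ∑ γ, ⟪f γ, z⟫ ^ 2 := by
  subst hspan
  have htop : ⊤ ≤ Submodule.span ℝ (Set.range fun γ =>
      (⟨f γ, Submodule.subset_span (Set.mem_range_self γ)⟩ : Submodule.span ℝ (Set.range f))) := by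
    rw [top_le_iff, ← Submodule.span_span_coe_preimage (s := Set.range f)]
    congr 1
    ext ⟨x, hx⟩
    simp [Subtype.ext_iff]
  let b := OrthonormalBasis.mk (orthonormal_span hf) htop
  simpa [b] using (b.sum_sq_inner_right (Submodule.orthogonalProjectionOnto _ z)).symm

variable {L : E →ₗ[ℝ] E →ₗ[ℝ] E}

theorem bracket_anticomm (halt : ∀ x, L x x = 0) (x y : E) : L x y = -L y x :=
  eq_neg_of_add_eq_zero_left (by simpa [halt] using halt (x + y))

theorem inner_bracket_swap (had : ∀ x y z, ⟪L x y, z⟫ + ⟪y, L x z⟫ = 0) (x y z : E) :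
    ⟪L x z, y⟫ = -⟪L x y, z⟫ := by
  linarith [had x y z, real_inner_comm (L x z) y]

theorem inner_bracket_cyclic (halt : ∀ x, L x x = 0)
    (had : ∀ x y z, ⟪L x y, z⟫ + ⟪y, L x z⟫ = 0) (x y z : E) :
    ⟪L x y, z⟫ = ⟪L y z, x⟫ := by
  rw [bracket_anticomm halt x y, inner_neg_left, inner_bracket_swap had, neg_neg]

theorem inner_bracket_bracket_self (had : ∀ x y z, ⟪L x y, z⟫ + ⟪y, L x z⟫ = 0) (x y : E) :
    ⟪L x (L x y), y⟫ = -‖L x y‖ ^ 2 := by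
  rw [inner_bracket_swap had, real_inner_self_eq_norm_sq]

theorem sum_norm_sq_starProjection_bracket_comm
    (had : ∀ x y z, ⟪L x y, z⟫ + ⟪y, L x z⟫ = 0) {ι₁ ι₂ : Type*} [Fintype ι₁] [Fintype ι₂]
    {K₁ K₂ : Submodule ℝ E} [K₁.HasOrthogonalProjection] [K₂.HasOrthogonalProjection]
    {f₁ : ι₁ → E} {f₂ : ι₂ → E} (hf₁ : Orthonormal ℝ f₁) (hf₂ : Orthonormal ℝ f₂)
    (hspan₁ : Submodule.span ℝ (Set.range f₁) = K₁)
    (hspan₂ : Submodule.span ℝ (Set.range f₂) = K₂) (x : E) :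
    ∑ β, ‖K₂.starProjection (L x (f₁ β))‖ ^ 2 = ∑ γ, ‖K₁.starProjection (L x (f₂ γ))‖ ^ 2 := by
  simp only [norm_sq_starProjection_eq_sum_sq_inner hf₁ hspan₁,
    norm_sq_starProjection_eq_sum_sq_inner hf₂ hspan₂]
  rw [Finset.sum_comm]
  refine Finset.sum_congr rfl fun γ _ => Finset.sum_congr rfl fun β _ => ?_
  rw [real_inner_comm, inner_bracket_swap had, neg_sq, real_inner_comm]

end InnerProductSpace

section Decomposition

variable {ℓ : ℕ} {𝔥 : Submodule ℝ 𝔤} {m : Fin ℓ → Submodule ℝ 𝔤} {lam : Fin ℓ → ℝ}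

theorem gmet_eq_mul_inner_of_mem_right
    (hm : OrthogonalFamily ℝ (fun i => m i) fun i => (m i).subtypeₗᵢ) {k : Fin ℓ} {z : 𝔤}
    (hz : z ∈ m k) (u : 𝔤) : gmet m lam u z = lam k * ⟪u, z⟫ := by
  rw [gmet, Finset.sum_eq_single k]
  · simp only [← Submodule.starProjection_apply, (m k).starProjection_eq_self_iff.mpr hz,
      Submodule.inner_starProjection_eq_of_mem_right hz]
  · intro i _ hik
    simp only [← Submodule.starProjection_apply,
      (m i).starProjection_apply_eq_zero_iff.mpr (hm.isOrtho hik.symm hz), inner_zero_right,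
      mul_zero]
  · simp

theorem gmet_starProjection_orthogonal_self (hm_le : ∀ k, m k ≤ 𝔥ᗮ) (z : 𝔤) :
    gmet m lam (𝔥ᗮ.starProjection z) (𝔥ᗮ.starProjection z)
      = ∑ k, lam k * ‖(m k).starProjection z‖ ^ 2 := by
  simp only [gmet, Submodule.orthogonalProjectionOnto_starProjection_of_le (hm_le _),
    ← Submodule.starProjection_apply, real_inner_self_eq_norm_sq]

theorem sum_starProjection_eq_starProjection_orthogonal
    (hm : OrthogonalFamily ℝ (fun i => m i) fun i => (m i).subtypeₗᵢ)
    (hm_le : ∀ k, m k ≤ 𝔥ᗮ) (hm_span : ⨆ k, m k = 𝔥ᗮ) (x : 𝔤) :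
    ∑ k, (m k).starProjection x = 𝔥ᗮ.starProjection x := by
  conv_rhs => rw [← hm.sum_projection_of_mem_iSup (𝔥ᗮ.starProjection x)
    (by rw [hm_span]; exact Submodule.starProjection_apply_mem _ _)]
  simp only [← ContinuousLinearMap.comp_apply,
    Submodule.starProjection_comp_starProjection_of_le (hm_le _)]

theorem norm_sq_eq_norm_sq_starProjection_add_sum
    (hm : OrthogonalFamily ℝ (fun i => m i) fun i => (m i).subtypeₗᵢ)
    (hm_le : ∀ k, m k ≤ 𝔥ᗮ) (hm_span : ⨆ k, m k = 𝔥ᗮ) (x : 𝔤) :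
    ‖x‖ ^ 2 = ‖𝔥.starProjection x‖ ^ 2 + ∑ k, ‖(m k).starProjection x‖ ^ 2 := by
  rw [Submodule.norm_sq_eq_add_norm_sq_starProjection x 𝔥,
    ← sum_starProjection_eq_starProjection_orthogonal hm hm_le hm_span]
  exact congrArg _ (hm.norm_sum (fun k => (m k).orthogonalProjectionOnto x) Finset.univ)

end Decomposition

section Curvature

variable {ℓ : ℕ} {𝔥 : Submodule ℝ 𝔤} {m : Fin ℓ → Submodule ℝ 𝔤} {lam : Fin ℓ → ℝ}
  {L : 𝔤 →ₗ[ℝ] 𝔤 →ₗ[ℝ] 𝔤} {U : 𝔤 → 𝔤 → 𝔤}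

def IsUTensor (𝔥 : Submodule ℝ 𝔤) (m : Fin ℓ → Submodule ℝ 𝔤) (lam : Fin ℓ → ℝ)
    (L : 𝔤 →ₗ[ℝ] 𝔤 →ₗ[ℝ] 𝔤) (U : 𝔤 → 𝔤 → 𝔤) : Prop :=
  ∀ x ∈ 𝔥ᗮ, ∀ y ∈ 𝔥ᗮ, ∀ z ∈ 𝔥ᗮ,
    2 * gmet m lam (U x y) z =
      gmet m lam ((Submodule.orthogonalProjectionOnto 𝔥ᗮ (L z x) : 𝔤)) y +
      gmet m lam ((Submodule.orthogonalProjectionOnto 𝔥ᗮ (L z y) : 𝔤)) x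

theorem starProjection_bracket_eq_zero_of_ne (halt : ∀ x, L x x = 0)
    (had : ∀ x y z, ⟪L x y, z⟫ + ⟪y, L x z⟫ = 0)
    (hm : OrthogonalFamily ℝ (fun i => m i) fun i => (m i).subtypeₗᵢ)
    (hm_inv : ∀ i, ∀ h ∈ 𝔥, ∀ x ∈ m i, L h x ∈ m i) {i j : Fin ℓ} (hij : i ≠ j) {x y : 𝔤}
    (hx : x ∈ m i) (hy : y ∈ m j) : 𝔥.starProjection (L x y) = 0 := by
  refine 𝔥.starProjection_apply_eq_zero_iff.mpr fun w hw => ?_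
  rw [real_inner_comm, inner_bracket_cyclic halt had, inner_bracket_cyclic halt had]
  exact (hm.isOrtho hij).inner_eq (hm_inv i w hw x hx) hy

theorem starProjection_U_of_mem (halt : ∀ x, L x x = 0)
    (had : ∀ x y z, ⟪L x y, z⟫ + ⟪y, L x z⟫ = 0)
    (hm : OrthogonalFamily ℝ (fun i => m i) fun i => (m i).subtypeₗᵢ)
    (hm_le : ∀ k, m k ≤ 𝔥ᗮ) (hlam : ∀ k, 0 < lam k) (hU : IsUTensor 𝔥 m lam L U)
    {i j : Fin ℓ} {x y : 𝔤} (hx : x ∈ m i) (hy : y ∈ m j) (k : Fin ℓ) :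
    (m k).starProjection (U x y) = ((lam j - lam i) / (2 * lam k)) • (m k).starProjection (L x y) := by
  refine Submodule.eq_starProjection_of_mem_of_inner_eq_zero
    (Submodule.smul_mem _ _ (Submodule.starProjection_apply_mem _ _)) fun w hw => ?_
  have h := hU x (hm_le i hx) y (hm_le j hy) w (hm_le k hw)
  simp only [← Submodule.starProjection_apply, gmet_eq_mul_inner_of_mem_right hm hw,
    gmet_eq_mul_inner_of_mem_right hm hx, gmet_eq_mul_inner_of_mem_right hm hy,
    Submodule.inner_starProjection_eq_of_mem_right (hm_le i hx),
    Submodule.inner_starProjection_eq_of_mem_right (hm_le j hy)] at h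
  rw [inner_bracket_cyclic halt had w x, inner_bracket_cyclic halt had w y,
    bracket_anticomm halt y x, inner_neg_left] at h
  rw [inner_sub_left, real_inner_smul_left, Submodule.inner_starProjection_eq_of_mem_right hw]
  have hk := (hlam k).ne'
  field_simp
  linarith

theorem U_self_eq_zero (halt : ∀ x, L x x = 0) (had : ∀ x y z, ⟪L x y, z⟫ + ⟪y, L x z⟫ = 0)
    (hm : OrthogonalFamily ℝ (fun i => m i) fun i => (m i).subtypeₗᵢ)
    (hm_le : ∀ k, m k ≤ 𝔥ᗮ) (hm_span : ⨆ k, m k = 𝔥ᗮ) (hlam : ∀ k, 0 < lam k)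
    (hUmem : ∀ x y, U x y ∈ 𝔥ᗮ) (hU : IsUTensor 𝔥 m lam L U) {i : Fin ℓ} {x : 𝔤}
    (hx : x ∈ m i) : U x x = 0 := by
  rw [← 𝔥ᗮ.starProjection_eq_self_iff.mpr (hUmem x x),
    ← sum_starProjection_eq_starProjection_orthogonal hm hm_le hm_span]
  simp [starProjection_U_of_mem halt had hm hm_le hlam hU hx hx]

theorem gmet_U_self (halt : ∀ x, L x x = 0) (had : ∀ x y z, ⟪L x y, z⟫ + ⟪y, L x z⟫ = 0)
    (hm : OrthogonalFamily ℝ (fun i => m i) fun i => (m i).subtypeₗᵢ)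
    (hm_le : ∀ k, m k ≤ 𝔥ᗮ) (hlam : ∀ k, 0 < lam k) (hU : IsUTensor 𝔥 m lam L U)
    {i j : Fin ℓ} {x y : 𝔤} (hx : x ∈ m i) (hy : y ∈ m j) :
    gmet m lam (U x y) (U x y)
      = ∑ k, (lam j - lam i) ^ 2 / (4 * lam k) * ‖(m k).starProjection (L x y)‖ ^ 2 := by
  simp only [gmet, ← Submodule.starProjection_apply,
    starProjection_U_of_mem halt had hm hm_le hlam hU hx hy, real_inner_self_eq_norm_sq,
    norm_smul, mul_pow, Real.norm_eq_abs, sq_abs]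
  refine Finset.sum_congr rfl fun k _ => ?_
  have hk := (hlam k).ne'
  field_simp
  ring

theorem gmet_starProjection_bracket_bracket (had : ∀ x y z, ⟪L x y, z⟫ + ⟪y, L x z⟫ = 0)
    (hm : OrthogonalFamily ℝ (fun i => m i) fun i => (m i).subtypeₗᵢ)
    (hm_le : ∀ k, m k ≤ 𝔥ᗮ) {j : Fin ℓ} {y : 𝔤} (hy : y ∈ m j) (x : 𝔤) :
    gmet m lam (𝔥ᗮ.starProjection (L x (L x y))) y = -(lam j * ‖L x y‖ ^ 2) := by
  rw [gmet_eq_mul_inner_of_mem_right hm hy,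
    Submodule.inner_starProjection_eq_of_mem_right (hm_le j hy), inner_bracket_bracket_self had,
    mul_neg]

theorem Kcurv_eq_of_mem (halt : ∀ x, L x x = 0) (had : ∀ x y z, ⟪L x y, z⟫ + ⟪y, L x z⟫ = 0)
    (hm : OrthogonalFamily ℝ (fun i => m i) fun i => (m i).subtypeₗᵢ)
    (hm_le : ∀ k, m k ≤ 𝔥ᗮ) (hm_span : ⨆ k, m k = 𝔥ᗮ) (hlam : ∀ k, 0 < lam k)
    (hUmem : ∀ x y, U x y ∈ 𝔥ᗮ) (hU : IsUTensor 𝔥 m lam L U) {i j : Fin ℓ} {X Y : 𝔤}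
    (hX : X ∈ m i) (hY : Y ∈ m j) :
    Kcurv 𝔥 m lam L U i j X Y = (lam i * lam j)⁻¹ *
      ((lam i + lam j) / 2 * ‖𝔥.starProjection (L X Y)‖ ^ 2
        + ∑ k, ((lam i + lam j) / 2 - 3 * lam k / 4 + (lam j - lam i) ^ 2 / (4 * lam k))
          * ‖(m k).starProjection (L X Y)‖ ^ 2) := by
  simp only [Kcurv, ← Submodule.starProjection_apply]
  set x := (√(lam i))⁻¹ • X
  set y := (√(lam j))⁻¹ • Y
  have hx : x ∈ m i := Submodule.smul_mem _ _ hX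
  have hy : y ∈ m j := Submodule.smul_mem _ _ hY
  have hscale (K : Submodule ℝ 𝔤) :
      ‖K.starProjection (L x y)‖ ^ 2 = (lam i * lam j)⁻¹ * ‖K.starProjection (L X Y)‖ ^ 2 := by
    rw [show L x y = ((√(lam i))⁻¹ * (√(lam j))⁻¹) • L X Y by simp [x, y, smul_smul, mul_comm],
      map_smul, norm_smul, mul_pow, Real.norm_eq_abs, sq_abs, mul_pow, inv_pow, inv_pow,
      Real.sq_sqrt (hlam i).le, Real.sq_sqrt (hlam j).le, mul_inv]
  have hyx : ‖L y x‖ = ‖L x y‖ := by rw [bracket_anticomm halt, norm_neg]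
  have hzero : gmet m lam 0 (U y y) = 0 := by simp [gmet]
  rw [gmet_starProjection_orthogonal_self hm_le, gmet_starProjection_bracket_bracket had hm hm_le hy,
    gmet_starProjection_bracket_bracket had hm hm_le hx, gmet_U_self halt had hm hm_le hlam hU hx hy,
    U_self_eq_zero halt had hm hm_le hm_span hlam hUmem hU hx, hzero, hyx,
    norm_sq_eq_norm_sq_starProjection_add_sum hm hm_le hm_span (L x y)]
  simp only [hscale]
  have hsum : (lam i * lam j)⁻¹ *
      ∑ k, ((lam i + lam j) / 2 - 3 * lam k / 4 + (lam j - lam i) ^ 2 / (4 * lam k))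
        * ‖(m k).starProjection (L X Y)‖ ^ 2
      = (lam i + lam j) / 2 * ∑ k, (lam i * lam j)⁻¹ * ‖(m k).starProjection (L X Y)‖ ^ 2
        - 3 / 4 * ∑ k, lam k * ((lam i * lam j)⁻¹ * ‖(m k).starProjection (L X Y)‖ ^ 2)
        + ∑ k, (lam j - lam i) ^ 2 / (4 * lam k)
          * ((lam i * lam j)⁻¹ * ‖(m k).starProjection (L X Y)‖ ^ 2) := by
    simp only [Finset.mul_sum, ← Finset.sum_sub_distrib, ← Finset.sum_add_distrib]
    exact Finset.sum_congr rfl fun k _ => by ring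
  conv_rhs => rw [mul_add, hsum]
  ring

theorem sum_sum_Kcurv_eq_of_mem (halt : ∀ x, L x x = 0)
    (had : ∀ x y z, ⟪L x y, z⟫ + ⟪y, L x z⟫ = 0)
    (hm : OrthogonalFamily ℝ (fun i => m i) fun i => (m i).subtypeₗᵢ)
    (hm_le : ∀ k, m k ≤ 𝔥ᗮ) (hm_span : ⨆ k, m k = 𝔥ᗮ) (hlam : ∀ k, 0 < lam k)
    (hUmem : ∀ x y, U x y ∈ 𝔥ᗮ) (hU : IsUTensor 𝔥 m lam L U) {i j : Fin ℓ}
    {ι₁ ι₂ : Type*} [Fintype ι₁] [Fintype ι₂] {f : ι₁ → 𝔤} {g : ι₂ → 𝔤} (hf : ∀ α, f α ∈ m i)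
    (hg : ∀ β, g β ∈ m j) :
    ∑ α, ∑ β, Kcurv 𝔥 m lam L U i j (f α) (g β) = (lam i * lam j)⁻¹ *
      ((lam i + lam j) / 2 * ∑ α, ∑ β, ‖𝔥.starProjection (L (f α) (g β))‖ ^ 2
        + ∑ k, ((lam i + lam j) / 2 - 3 * lam k / 4 + (lam j - lam i) ^ 2 / (4 * lam k))
          * ∑ α, ∑ β, ‖(m k).starProjection (L (f α) (g β))‖ ^ 2) := by
  simp only [Kcurv_eq_of_mem halt had hm hm_le hm_span hlam hUmem hU (hf _) (hg _),
    Finset.mul_sum, mul_add, Finset.sum_add_distrib]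
  exact congrArg _ ((Finset.sum_congr rfl fun α _ => Finset.sum_comm).trans Finset.sum_comm)

end Curvature

theorem Finset.sum_sum_mul_eq_zero_of_antisymm_of_symm {ι R : Type*} [Fintype ι] [CommRing R]
    [NoZeroDivisors R] [CharZero R] {f T : ι → ι → R} (hf : ∀ j k, f j k = -f k j)
    (hT : ∀ j k, T j k = T k j) : ∑ j, ∑ k, f j k * T j k = 0 := by
  refine self_eq_neg.mp ?_
  calc ∑ j, ∑ k, f j k * T j k = ∑ j, ∑ k, f k j * T k j := Finset.sum_comm
    _ = -∑ j, ∑ k, f j k * T j k := by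
      simp only [← Finset.sum_neg_distrib]
      exact Finset.sum_congr rfl fun j _ => Finset.sum_congr rfl fun k _ => by
        rw [hf k j, hT k j, neg_mul]

theorem sum_sum_sectional_coeff_mul_eq_of_symm {ι : Type*} [Fintype ι] {lam : ι → ℝ}
    (hlam : ∀ k, 0 < lam k) {T : ι → ι → ℝ} (hT : ∀ j k, T j k = T k j) (i : ι) :
    ∑ j, (lam i * lam j)⁻¹
        * ∑ k, ((lam i + lam j) / 2 - 3 * lam k / 4 + (lam j - lam i) ^ 2 / (4 * lam k)) * T j k
      = 1 / (2 * lam i) * ∑ j, ∑ k, T j k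
        - 1 / 2 * ∑ j, ∑ k, T j k * (lam k / (lam i * lam j))
        + 1 / 4 * ∑ j, ∑ k, T j k * (lam i / (lam j * lam k)) := by
  have hanti := Finset.sum_sum_mul_eq_zero_of_antisymm_of_symm (T := T)
    (f := fun j k => (lam i * lam j)⁻¹
        * ((lam i + lam j) / 2 - 3 * lam k / 4 + (lam j - lam i) ^ 2 / (4 * lam k))
      - (1 / (2 * lam i) - lam k / (2 * lam i * lam j) + lam i / (4 * lam j * lam k)))
    (fun j k => by
      have := (hlam i).ne'; have := (hlam j).ne'; have := (hlam k).ne'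
      field_simp
      ring) hT
  rw [← sub_eq_zero, ← hanti]
  simp only [Finset.mul_sum, ← Finset.sum_sub_distrib, ← Finset.sum_add_distrib]
  refine Finset.sum_congr rfl fun j _ => Finset.sum_congr rfl fun k _ => ?_
  ring

theorem ricci_trace_identity_general {ℓ : ℕ}
    -- 𝔤 is a real Lie algebra with bracket L …
    (L : 𝔤 →ₗ[ℝ] 𝔤 →ₗ[ℝ] 𝔤)
    (halt : ∀ x : 𝔤, L x x = 0)
    -- … whose inner product Q is ad-invariant
    (had : ∀ x y z : 𝔤, ⟪L x y, z⟫ + ⟪y, L x z⟫ = 0)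
    -- 𝔥 ⊆ 𝔤 is a Lie subalgebra, m := 𝔥ᗮ
    (𝔥 : Submodule ℝ 𝔤)
    -- m = m_1 ⊕ ⋯ ⊕ m_ℓ, pairwise Q-orthogonal, with ⁅𝔥, m_i⁆ ⊆ m_i
    (m : Fin ℓ → Submodule ℝ 𝔤)
    (hm_le : ∀ i, m i ≤ 𝔥ᗮ)
    (hm_orth : ∀ i j, i ≠ j → ∀ x ∈ m i, ∀ y ∈ m j, ⟪x, y⟫ = 0)
    (hm_span : (⨆ i, m i) = 𝔥ᗮ)
    (hm_inv : ∀ i, ∀ h ∈ 𝔥, ∀ x ∈ m i, L h x ∈ m i)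
    -- the positive coefficients λ_i
    (lam : Fin ℓ → ℝ) (hlam : ∀ i, 0 < lam i)
    -- U is the symmetric bilinear map on m determined by
    -- 2 g(U(X,Y), Z) = g(⁅Z,X⁆_m, Y) + g(⁅Z,Y⁆_m, X) for all Z ∈ m
    (U : 𝔤 → 𝔤 → 𝔤)
    (hUmem : ∀ x y, U x y ∈ 𝔥ᗮ)
    (hU : ∀ x ∈ 𝔥ᗮ, ∀ y ∈ 𝔥ᗮ, ∀ z ∈ 𝔥ᗮ,
      2 * gmet m lam (U x y) z =
        gmet m lam ((Submodule.orthogonalProjectionOnto 𝔥ᗮ (L z x) : 𝔤)) y +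
        gmet m lam ((Submodule.orthogonalProjectionOnto 𝔥ᗮ (L z y) : 𝔤)) x)
    -- an adapted Q-orthonormal basis (e_α) of m: Q-orthonormal basis e i of each m_i,
    -- with d_i = dim m_i
    (d : Fin ℓ → ℕ)
    (e : ∀ i, Fin (d i) → 𝔤)
    (he_mem : ∀ i α, e i α ∈ m i)
    (he_span : ∀ i, Submodule.span ℝ (Set.range (e i)) = m i)
    (he_on : ∀ i (α β : Fin (d i)), ⟪e i α, e i β⟫ = if α = β then 1 else 0)
    -- the structure constants [ijk]
    (T : Fin ℓ → Fin ℓ → Fin ℓ → ℝ)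
    (hT : ∀ i j k, T i j k =
      ∑ α, ∑ β, ‖(Submodule.orthogonalProjectionOnto (m k) (L (e i α) (e j β)) : 𝔤)‖ ^ 2)
    -- the Casimir constants c_i ≥ 0
    (c : Fin ℓ → ℝ)
    (hc : ∀ i, (∑ α, ∑ β, ‖(Submodule.orthogonalProjectionOnto 𝔥 (L (e i α) (e i β)) : 𝔤)‖ ^ 2)
      = (d i : ℝ) * c i)
    -- the coefficients b_i defined by d_i b_i = 2 d_i c_i + Σ_{j,k} [ijk]
    (b : Fin ℓ → ℝ)
    (hb : ∀ i, (d i : ℝ) * b i = 2 * (d i : ℝ) * c i + ∑ j, ∑ k, T i j k) :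
    ∀ i, (∑ j, ∑ α, ∑ β, Kcurv 𝔥 m lam L U i j (e i α) (e j β))
      = (d i : ℝ) * b i / (2 * lam i)
        - (1 / 2) * ∑ j, ∑ k, T i j k * (lam k / (lam i * lam j))
        + (1 / 4) * ∑ j, ∑ k, T i j k * (lam i / (lam j * lam k)) := by
  intro i
  simp only [← Submodule.starProjection_apply] at hT hc
  have hm : OrthogonalFamily ℝ (fun i => m i) fun i => (m i).subtypeₗᵢ :=
    orthogonalFamily_iff_pairwise.mpr fun j k hjk =>
      Submodule.isOrtho_iff_inner_eq.mpr (hm_orth j k hjk)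
  have he : ∀ j, Orthonormal ℝ (e j) := fun j => orthonormal_iff_ite.mpr (he_on j)
  have hTsymm : ∀ j k, T i j k = T i k j := fun j k => by
    simp only [hT]
    exact Finset.sum_congr rfl fun α _ => sum_norm_sq_starProjection_bracket_comm had
      (he j) (he k) (he_span j) (he_span k) _
  have hH : ∀ j, ∑ α, ∑ β, ‖𝔥.starProjection (L (e i α) (e j β))‖ ^ 2
      = if j = i then (d i : ℝ) * c i else 0 := fun j => by
    split_ifs with hji
    · exact hji ▸ hc i
    · simp [starProjection_bracket_eq_zero_of_ne halt had hm hm_inv (Ne.symm hji)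
        (he_mem i _) (he_mem j _)]
  have hrow : ∀ j, ∑ α, ∑ β, Kcurv 𝔥 m lam L U i j (e i α) (e j β)
      = (lam i * lam j)⁻¹ * ((lam i + lam j) / 2 * (if j = i then (d i : ℝ) * c i else 0)
        + ∑ k, ((lam i + lam j) / 2 - 3 * lam k / 4 + (lam j - lam i) ^ 2 / (4 * lam k))
          * T i j k) := fun j => by
    rw [sum_sum_Kcurv_eq_of_mem halt had hm hm_le hm_span hlam hUmem hU (he_mem i) (he_mem j),
      hH j]
    simp only [hT]
  simp only [hrow, mul_add, Finset.sum_add_distrib, mul_ite, mul_zero, Finset.sum_ite_eq',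
    Finset.mem_univ, if_true, sum_sum_sectional_coeff_mul_eq_of_symm hlam hTsymm i]
  have := (hlam i).ne'
  linear_combination (norm := (field_simp; ring)) (-1 / (2 * lam i)) * hb i

/-- With an adapted `Q`-orthonormal basis `(e_α)` of `m`, structure
constants `[ijk]`, Casimir constants `c_i` and the coefficients `b_i` defined by
`d_i b_i = 2 d_i c_i + Σ_{j,k} [ijk]`, the Ricci trace identity holds:
`Σ_j Σ_{e_α∈m_i, e_β∈m_j} K(e_α, e_β)
  = d_i b_i/(2λ_i) − (1/2) Σ_{j,k} [ijk] λ_k/(λ_i λ_j) + (1/4) Σ_{j,k} [ijk] λ_i/(λ_j λ_k)`. -/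
theorem ricci_trace_identity {ℓ : ℕ}
    -- 𝔤 is a real Lie algebra with bracket L …
    (L : 𝔤 →ₗ[ℝ] 𝔤 →ₗ[ℝ] 𝔤)
    (halt : ∀ x : 𝔤, L x x = 0)
    (hjac : ∀ x y z : 𝔤, L x (L y z) + L y (L z x) + L z (L x y) = 0)
    -- … whose inner product Q is ad-invariant
    (had : ∀ x y z : 𝔤, ⟪L x y, z⟫ + ⟪y, L x z⟫ = 0)
    -- 𝔥 ⊆ 𝔤 is a Lie subalgebra, m := 𝔥ᗮ
    (𝔥 : Submodule ℝ 𝔤) (h𝔥 : ∀ x ∈ 𝔥, ∀ y ∈ 𝔥, L x y ∈ 𝔥)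
    -- m = m_1 ⊕ ⋯ ⊕ m_ℓ, pairwise Q-orthogonal, with ⁅𝔥, m_i⁆ ⊆ m_i
    (m : Fin ℓ → Submodule ℝ 𝔤)
    (hm_le : ∀ i, m i ≤ 𝔥ᗮ)
    (hm_orth : ∀ i j, i ≠ j → ∀ x ∈ m i, ∀ y ∈ m j, ⟪x, y⟫ = 0)
    (hm_span : (⨆ i, m i) = 𝔥ᗮ)
    (hm_inv : ∀ i, ∀ h ∈ 𝔥, ∀ x ∈ m i, L h x ∈ m i)
    -- the positive coefficients λ_i
    (lam : Fin ℓ → ℝ) (hlam : ∀ i, 0 < lam i)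
    -- U is the symmetric bilinear map on m determined by
    -- 2 g(U(X,Y), Z) = g(⁅Z,X⁆_m, Y) + g(⁅Z,Y⁆_m, X) for all Z ∈ m
    (U : 𝔤 → 𝔤 → 𝔤)
    (hUmem : ∀ x y, U x y ∈ 𝔥ᗮ)
    (hUsymm : ∀ x y, U x y = U y x)
    (hU : ∀ x ∈ 𝔥ᗮ, ∀ y ∈ 𝔥ᗮ, ∀ z ∈ 𝔥ᗮ,
      2 * gmet m lam (U x y) z =
        gmet m lam ((Submodule.orthogonalProjectionOnto 𝔥ᗮ (L z x) : 𝔤)) y +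
        gmet m lam ((Submodule.orthogonalProjectionOnto 𝔥ᗮ (L z y) : 𝔤)) x)
    -- an adapted Q-orthonormal basis (e_α) of m: Q-orthonormal basis e i of each m_i,
    -- with d_i = dim m_i
    (d : Fin ℓ → ℕ) (hd : ∀ i, Module.finrank ℝ (m i) = d i)
    (e : ∀ i, Fin (d i) → 𝔤)
    (he_mem : ∀ i α, e i α ∈ m i)
    (he_span : ∀ i, Submodule.span ℝ (Set.range (e i)) = m i)
    (he_on : ∀ i (α β : Fin (d i)), ⟪e i α, e i β⟫ = if α = β then 1 else 0)
    -- the structure constants [ijk]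
    (T : Fin ℓ → Fin ℓ → Fin ℓ → ℝ)
    (hT : ∀ i j k, T i j k =
      ∑ α, ∑ β, ‖(Submodule.orthogonalProjectionOnto (m k) (L (e i α) (e j β)) : 𝔤)‖ ^ 2)
    -- the Casimir constants c_i ≥ 0
    (c : Fin ℓ → ℝ) (hc0 : ∀ i, 0 ≤ c i)
    (hc : ∀ i, (∑ α, ∑ β, ‖(Submodule.orthogonalProjectionOnto 𝔥 (L (e i α) (e i β)) : 𝔤)‖ ^ 2)
      = (d i : ℝ) * c i)
    -- the coefficients b_i defined by d_i b_i = 2 d_i c_i + Σ_{j,k} [ijk]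
    (b : Fin ℓ → ℝ)
    (hb : ∀ i, (d i : ℝ) * b i = 2 * (d i : ℝ) * c i + ∑ j, ∑ k, T i j k) :
    ∀ i, (∑ j, ∑ α, ∑ β, Kcurv 𝔥 m lam L U i j (e i α) (e j β))
      = (d i : ℝ) * b i / (2 * lam i)
        - (1 / 2) * ∑ j, ∑ k, T i j k * (lam k / (lam i * lam j))
        + (1 / 4) * ∑ j, ∑ k, T i j k * (lam i / (lam j * lam k)) :=
  ricci_trace_identity_general L halt had 𝔥 m hm_le hm_orth hm_span hm_inv lam hlam U hUmem hU d e
    he_mem he_span he_on T hT c hc b hb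
end

section
/- Assume Z(𝔤) = 0. Let 𝔥 ⊆ 𝔨 ⊆ 𝔤 be Lie subalgebras with ⁅𝔨,𝔨⁆ ⊆ 𝔥 (𝔨 is toral over 𝔥), and suppose the only ideal of 𝔤 contained in 𝔥 is {0} (almost-effectivity). Then 𝔨 is faithfully represented by its adjoint action on 𝔨^⊥: if X ∈ 𝔨 satisfies ⁅X, p⁆ = 0 for all p ∈ 𝔨^⊥, then X = 0. -/
open scoped RealInnerProductSpace

variable {𝔤 : Type*} [NormedAddCommGroup 𝔤] [InnerProductSpace ℝ 𝔤] [FiniteDimensional ℝ 𝔤]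

/-!
Let `C ⊆ 𝔨` be the kernel of the isotropy representation of `𝔨` on `𝔨ᗮ`. Since `𝔨ᗮ` is
`ad 𝔨`-stable (ad-invariance of `Q`), the Jacobi identity makes `C` an ideal of `𝔤`; and since
`⁅𝔨ᗮ, C⁆ = 0`, every bracket `⁅y, x⁆` with `x ∈ C` equals `⁅y_𝔨, x⁆ ∈ ⁅𝔨, 𝔨⁆ ⊆ 𝔥`. Hence
`C ⊓ 𝔥` is an ideal of `𝔤` inside `𝔥`, so it vanishes, and then `⁅𝔤, C⁆ ⊆ C ⊓ 𝔥 = 0` puts `C`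
in the centre, which is trivial.
-/

theorem bracket_swap_of_alternating {R M : Type*} [CommSemiring R] [AddCommGroup M] [Module R M]
    (L : M →ₗ[R] M →ₗ[R] M) (halt : ∀ x, L x x = 0) (x y : M) : L x y = -L y x := by
  have h := halt (x + y)
  simp only [map_add, LinearMap.add_apply, halt, zero_add, add_zero] at h
  exact eq_neg_of_add_eq_zero_right h

section

variable {V : Type*} [NormedAddCommGroup V] [InnerProductSpace ℝ V] (L : V →ₗ[ℝ] V →ₗ[ℝ] V)

theorem bracket_mem_orthogonal_of_invariant (had : ∀ x y z, ⟪L x y, z⟫ + ⟪y, L x z⟫ = 0)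
    {K : Submodule ℝ V} (hK : ∀ x ∈ K, ∀ y ∈ K, L x y ∈ K)
    {k p : V} (hk : k ∈ K) (hp : p ∈ Kᗮ) : L k p ∈ Kᗮ := by
  intro u hu
  have hpu : ⟪p, L k u⟫ = 0 := Submodule.inner_left_of_mem_orthogonal (hK k hk u hu) hp
  rw [real_inner_comm]
  linarith [had k p u]

def isotropyKernel (K : Submodule ℝ V) : Submodule ℝ V :=
  K ⊓ ⨅ p ∈ Kᗮ, LinearMap.ker (L.flip p)

variable {L}

theorem mem_isotropyKernel {K : Submodule ℝ V} {x : V} :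
    x ∈ isotropyKernel L K ↔ x ∈ K ∧ ∀ p ∈ Kᗮ, L x p = 0 := by
  simp [isotropyKernel, Submodule.mem_iInf]

variable (halt : ∀ x, L x x = 0) {K : Submodule ℝ V} [K.HasOrthogonalProjection]
include halt

theorem exists_mem_bracket_eq_of_mem_isotropyKernel {x : V} (hx : x ∈ isotropyKernel L K)
    (w : V) : ∃ k ∈ K, L w x = L k x := by
  obtain ⟨k, hk, p, hp, rfl⟩ := K.exists_add_mem_mem_orthogonal w
  refine ⟨k, hk, ?_⟩
  rw [map_add, LinearMap.add_apply, bracket_swap_of_alternating L halt p,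
    (mem_isotropyKernel.1 hx).2 p hp, neg_zero, add_zero]

theorem bracket_mem_isotropyKernel
    (hjac : ∀ x y z, L x (L y z) + L y (L z x) + L z (L x y) = 0)
    (had : ∀ x y z, ⟪L x y, z⟫ + ⟪y, L x z⟫ = 0) (hK : ∀ x ∈ K, ∀ y ∈ K, L x y ∈ K)
    {x : V} (hx : x ∈ isotropyKernel L K) (w : V) : L w x ∈ isotropyKernel L K := by
  obtain ⟨hxK, hxp⟩ := mem_isotropyKernel.1 hx
  obtain ⟨k, hk, hw⟩ := exists_mem_bracket_eq_of_mem_isotropyKernel halt hx w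
  refine mem_isotropyKernel.2 ⟨hw ▸ hK k hk x hxK, fun q hq => ?_⟩
  have hkq : L x (L q k) = 0 := by
    rw [bracket_swap_of_alternating L halt q, map_neg,
      hxp _ (bracket_mem_orthogonal_of_invariant L had hK hk hq), neg_zero]
  have hj := hjac k x q
  rw [hxp q hq, map_zero, zero_add, hkq, zero_add] at hj
  rw [hw, bracket_swap_of_alternating L halt, hj, neg_zero]

theorem bracket_mem_of_mem_isotropyKernel {H : Submodule ℝ V}
    (htoral : ∀ x ∈ K, ∀ y ∈ K, L x y ∈ H) {x : V} (hx : x ∈ isotropyKernel L K) (w : V) :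
    L w x ∈ H := by
  obtain ⟨k, hk, hw⟩ := exists_mem_bracket_eq_of_mem_isotropyKernel halt hx w
  exact hw ▸ htoral k hk x (mem_isotropyKernel.1 hx).1

end

theorem toral_faithful_isotropy_general
    -- 𝔤 is a real Lie algebra with bracket L …
    (L : 𝔤 →ₗ[ℝ] 𝔤 →ₗ[ℝ] 𝔤)
    (halt : ∀ x : 𝔤, L x x = 0)
    (hjac : ∀ x y z : 𝔤, L x (L y z) + L y (L z x) + L z (L x y) = 0)
    -- … whose inner product Q is ad-invariant
    (had : ∀ x y z : 𝔤, ⟪L x y, z⟫ + ⟪y, L x z⟫ = 0)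
    -- the center of 𝔤 is trivial
    (hcenter : ∀ x : 𝔤, (∀ y : 𝔤, L x y = 0) → x = 0)
    -- 𝔥 ⊆ 𝔨 ⊆ 𝔤 are Lie subalgebras
    (𝔥 𝔨 : Submodule ℝ 𝔤)
    (h𝔨 : ∀ x ∈ 𝔨, ∀ y ∈ 𝔨, L x y ∈ 𝔨)
    -- 𝔨 is toral over 𝔥: ⁅𝔨,𝔨⁆ ⊆ 𝔥
    (htoral : ∀ x ∈ 𝔨, ∀ y ∈ 𝔨, L x y ∈ 𝔥)
    -- almost-effectivity: the only ideal of 𝔤 contained in 𝔥 is {0}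
    (heff : ∀ n : Submodule ℝ 𝔤, (∀ y : 𝔤, ∀ x ∈ n, L y x ∈ n) → n ≤ 𝔥 → n = ⊥) :
    ∀ X ∈ 𝔨, (∀ p ∈ 𝔨ᗮ, L X p = 0) → X = 0 := by
  intro X hX hXp
  have hbracket_mem : ∀ y, ∀ x ∈ isotropyKernel L 𝔨, L y x ∈ isotropyKernel L 𝔨 ⊓ 𝔥 :=
    fun y x hx => ⟨bracket_mem_isotropyKernel halt hjac had h𝔨 hx y,
      bracket_mem_of_mem_isotropyKernel halt htoral hx y⟩
  have hbot : isotropyKernel L 𝔨 ⊓ 𝔥 = ⊥ :=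
    heff _ (fun y x hx => hbracket_mem y x hx.1) inf_le_right
  refine hcenter X fun y => ?_
  have hyX := hbracket_mem y X (mem_isotropyKernel.2 ⟨hX, hXp⟩)
  rw [hbot, Submodule.mem_bot] at hyX
  rw [bracket_swap_of_alternating L halt, hyX, neg_zero]

/-- Assume `Z(𝔤) = 0`. If `𝔥 ⊆ 𝔨 ⊆ 𝔤` are Lie subalgebras with
`⁅𝔨,𝔨⁆ ⊆ 𝔥` (`𝔨` toral over `𝔥`) and the only ideal of `𝔤` contained in `𝔥` is `{0}`
(almost-effectivity), then `𝔨` acts faithfully on `𝔨ᗮ` by the adjoint action: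
`⁅X, p⁆ = 0` for all `p ∈ 𝔨ᗮ` forces `X = 0` for `X ∈ 𝔨`. -/
theorem toral_faithful_isotropy
    -- 𝔤 is a real Lie algebra with bracket L …
    (L : 𝔤 →ₗ[ℝ] 𝔤 →ₗ[ℝ] 𝔤)
    (halt : ∀ x : 𝔤, L x x = 0)
    (hjac : ∀ x y z : 𝔤, L x (L y z) + L y (L z x) + L z (L x y) = 0)
    -- … whose inner product Q is ad-invariant
    (had : ∀ x y z : 𝔤, ⟪L x y, z⟫ + ⟪y, L x z⟫ = 0)
    -- the center of 𝔤 is trivial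
    (hcenter : ∀ x : 𝔤, (∀ y : 𝔤, L x y = 0) → x = 0)
    -- 𝔥 ⊆ 𝔨 ⊆ 𝔤 are Lie subalgebras
    (𝔥 𝔨 : Submodule ℝ 𝔤)
    (h𝔥 : ∀ x ∈ 𝔥, ∀ y ∈ 𝔥, L x y ∈ 𝔥)
    (h𝔨 : ∀ x ∈ 𝔨, ∀ y ∈ 𝔨, L x y ∈ 𝔨)
    (h𝔥𝔨 : 𝔥 ≤ 𝔨)
    -- 𝔨 is toral over 𝔥: ⁅𝔨,𝔨⁆ ⊆ 𝔥
    (htoral : ∀ x ∈ 𝔨, ∀ y ∈ 𝔨, L x y ∈ 𝔥)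
    -- almost-effectivity: the only ideal of 𝔤 contained in 𝔥 is {0}
    (heff : ∀ n : Submodule ℝ 𝔤, (∀ y : 𝔤, ∀ x ∈ n, L y x ∈ n) → n ≤ 𝔥 → n = ⊥) :
    ∀ X ∈ 𝔨, (∀ p ∈ 𝔨ᗮ, L X p = 0) → X = 0 :=
  toral_faithful_isotropy_general L halt hjac had hcenter 𝔥 𝔨 h𝔨 htoral heff
end

section
/- For each n ∈ ℕ let scal^{(n)} be the function built from data d_i > 0, b_i^{(n)} ≥ 0, [ijk]^{(n)} ≥ 0 (invariant under permutations of the three indices) and v_i^{(n)} ∈ ℝ. Assume that for each i the sequence (b_i^{(n)})_n is bounded, that [ijk]^{(n)} → [ijk]^{(∞)} and v_i^{(n)} → v_i^{(∞)} as n → ∞, that min_{i∈I} v_i^{(n)} < 0 for every n, that t_n → +∞, and that there is K ≥ 0 with scal^{(n)}(t_n) ≥ −K for all n. Then for all i, j, k ∈ I: [ijk]^{(∞)} > 0 implies v_i^{(∞)} − v_j^{(∞)} − v_k^{(∞)} + min_{l∈I} v_l^{(∞)} ≤ 0. (The limit direction of a divergent sequence of invariant metrics with scalar curvature bounded below is a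 submersion direction.) -/
/-!
If `[ijk]⁽∞⁾ > 0` but `v_i⁽∞⁾ - v_j⁽∞⁾ - v_k⁽∞⁾ + m > 0` with `m = min_l v_l⁽∞⁾`, then along
`t_n → ∞` the negative term of `scal⁽ⁿ⁾(t_n)` is at least of order `e^{t_n (v_i - v_j - v_k - ε)}`,
while the positive term is at most of order `e^{t_n (ε - m)}`. Since every `v⁽ⁿ⁾` has a negative
entry, `m ≤ 0`, so the first exponent is positive and exceeds the second: `scal⁽ⁿ⁾(t_n) → -∞`,
contradicting `scal⁽ⁿ⁾(t_n) ≥ -K`.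
-/

open Filter Topology Real

theorem tendsto_atBot_of_le_mul_exp_sub_mul_exp {ι : Type*} {F : Filter ι} {f t : ι → ℝ}
    {α β C c : ℝ} (ht : Tendsto t F atTop) (hαβ : α < β) (hβ : 0 < β) (hc : 0 < c)
    (hf : ∀ᶠ n in F, f n ≤ C * exp (t n * α) - c * exp (t n * β)) :
    Tendsto f F atBot := by
  refine tendsto_atBot_mono' F hf ?_
  have hgrow : Tendsto (fun n => exp (t n * β)) F atTop :=
    tendsto_exp_atTop.comp (ht.atTop_mul_const hβ)
  have hdecay : Tendsto (fun n => C * exp (t n * (α - β)) - c) F (𝓝 (-c)) := by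
    have h : Tendsto (fun n => exp (t n * (α - β))) F (𝓝 0) :=
      tendsto_exp_atBot.comp (ht.atTop_mul_const_of_neg (by linarith))
    simpa using (h.const_mul C).sub_const c
  convert hgrow.atTop_mul_neg (neg_neg_of_pos hc) hdecay using 2 with n
  rw [mul_sub, ← mul_assoc, mul_comm (exp _) C, mul_assoc, ← exp_add]
  ring_nf

theorem exists_nonpos_of_tendsto_of_frequently_exists_neg {ι I : Type*} [Finite I]
    {F : Filter ι} {v : ι → I → ℝ} {vinf : I → ℝ}
    (hv : ∀ l, Tendsto (fun n => v n l) F (𝓝 (vinf l))) (hneg : ∃ᶠ n in F, ∃ l, v n l < 0) :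
    ∃ l, vinf l ≤ 0 := by
  by_contra! hpos
  have hall : ∀ᶠ n in F, ∀ l, 0 < v n l :=
    eventually_all.2 fun l => (hv l).eventually (lt_mem_nhds (hpos l))
  obtain ⟨n, ⟨l, hl⟩, hn⟩ := (hneg.and_eventually hall).exists
  exact (hn l).not_gt hl

theorem single_le_sum_sum_sum {I : Type*} [Fintype I] {f : I → I → I → ℝ}
    (hf : ∀ i j k, 0 ≤ f i j k) (i j k : I) : f i j k ≤ ∑ i, ∑ j, ∑ k, f i j k :=
  calc f i j k
      ≤ ∑ k, f i j k :=
        Finset.single_le_sum (f := f i j) (fun _ _ => hf i j _) (Finset.mem_univ k)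
    _ ≤ ∑ j, ∑ k, f i j k :=
        Finset.single_le_sum (f := fun j => ∑ k, f i j k)
          (fun _ _ => Finset.sum_nonneg fun _ _ => hf i _ _) (Finset.mem_univ j)
    _ ≤ ∑ i, ∑ j, ∑ k, f i j k :=
        Finset.single_le_sum (f := fun i => ∑ j, ∑ k, f i j k)
          (fun _ _ => Finset.sum_nonneg fun _ _ => Finset.sum_nonneg fun _ _ => hf _ _ _)
          (Finset.mem_univ i)

section ScalarCurvature

variable {I : Type*} [Fintype I]

noncomputable def scalarCurvature (d b : I → ℝ) (T : I → I → I → ℝ) (v : I → ℝ) (t : ℝ) : ℝ :=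
  (1 / 2) * ∑ i, d i * b i * exp (-(t * v i))
    - (1 / 4) * ∑ i, ∑ j, ∑ k, T i j k * exp (t * (v i - v j - v k))

theorem scalarCurvature_le {d b B : I → ℝ} {T : I → I → I → ℝ} {v : I → ℝ} {t α : ℝ}
    (hd : ∀ l, 0 ≤ d l) (hbB : ∀ l, b l ≤ B l) (hB : ∀ l, 0 ≤ B l) (hT : ∀ i j k, 0 ≤ T i j k)
    (ht : 0 ≤ t) (hα : ∀ l, -v l ≤ α) (i j k : I) :
    scalarCurvature d b T v t ≤
      (1 / 2) * (∑ l, d l * B l) * exp (t * α)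
        - (1 / 4) * (T i j k * exp (t * (v i - v j - v k))) := by
  have hpos : ∑ l, d l * b l * exp (-(t * v l)) ≤ (∑ l, d l * B l) * exp (t * α) := by
    rw [Finset.sum_mul]
    refine Finset.sum_le_sum fun l _ => ?_
    have hexp : exp (-(t * v l)) ≤ exp (t * α) := by
      rw [exp_le_exp, ← mul_neg]
      exact mul_le_mul_of_nonneg_left (hα l) ht
    gcongr
    · exact mul_nonneg (hd l) (hB l)
    · exact hd l
    · exact hbB l
  have hneg := single_le_sum_sum_sum
    (fun i j k => mul_nonneg (hT i j k) (exp_pos (t * (v i - v j - v k))).le) i j k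
  unfold scalarCurvature
  linarith

theorem tendsto_scalarCurvature_atBot {ι : Type*} {F : Filter ι} {d B : I → ℝ}
    {b : ι → I → ℝ} {T : ι → I → I → I → ℝ} {v : ι → I → ℝ} {vinf : I → ℝ} {t : ι → ℝ}
    {τ m : ℝ} {i j k : I}
    (hd : ∀ l, 0 ≤ d l) (hbB : ∀ n l, b n l ≤ B l) (hB : ∀ l, 0 ≤ B l)
    (hT : ∀ n i j k, 0 ≤ T n i j k) (hTτ : Tendsto (fun n => T n i j k) F (𝓝 τ)) (hτ : 0 < τ)
    (hv : ∀ l, Tendsto (fun n => v n l) F (𝓝 (vinf l))) (ht : Tendsto t F atTop)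
    (hm : ∀ l, m ≤ vinf l) (hm0 : m ≤ 0) (hgap : 0 < vinf i - vinf j - vinf k + m) :
    Tendsto (fun n => scalarCurvature d (b n) (T n) (v n) (t n)) F atBot := by
  set ε := (vinf i - vinf j - vinf k + m) / 4 with hε
  have hε0 : 0 < ε := by positivity
  have hvl : ∀ᶠ n in F, ∀ l, -v n l ≤ ε - m :=
    eventually_all.2 fun l => (hv l).neg.eventually (eventually_le_nhds (by linarith [hm l]))
  have hvijk : ∀ᶠ n in F, vinf i - vinf j - vinf k - ε ≤ v n i - v n j - v n k :=
    (((hv i).sub (hv j)).sub (hv k)).eventually (eventually_ge_nhds (by linarith))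
  have hTn : ∀ᶠ n in F, τ / 2 ≤ T n i j k := hTτ.eventually (eventually_ge_nhds (by linarith))
  refine tendsto_atBot_of_le_mul_exp_sub_mul_exp (α := ε - m) (β := vinf i - vinf j - vinf k - ε)
    (C := (1 / 2) * ∑ l, d l * B l) (c := τ / 8)
    ht (by linarith) (by linarith) (by positivity) ?_
  filter_upwards [hvl, hvijk, hTn, ht.eventually_ge_atTop 0] with n hvl hvijk hTn htn
  calc scalarCurvature d (b n) (T n) (v n) (t n)
      ≤ (1 / 2) * (∑ l, d l * B l) * exp (t n * (ε - m))
          - (1 / 4) * (T n i j k * exp (t n * (v n i - v n j - v n k))) :=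
        scalarCurvature_le hd (hbB n) hB (hT n) htn hvl i j k
    _ ≤ (1 / 2) * (∑ l, d l * B l) * exp (t n * (ε - m))
          - τ / 8 * exp (t n * (vinf i - vinf j - vinf k - ε)) := by
        have hexp : exp (t n * (vinf i - vinf j - vinf k - ε)) ≤
            exp (t n * (v n i - v n j - v n k)) :=
          exp_le_exp.2 (mul_le_mul_of_nonneg_left hvijk htn)
        nlinarith [exp_pos (t n * (vinf i - vinf j - vinf k - ε))]

end ScalarCurvature

theorem limit_direction_is_submersion_direction_general
    {I : Type*} [Fintype I]
    (d : I → ℝ) (hd : ∀ i, 0 < d i)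
    (b : ℕ → I → ℝ)
    (hb_bdd : ∀ i, ∃ B : ℝ, ∀ n, b n i ≤ B)
    (T : ℕ → I → I → I → ℝ) (hT0 : ∀ n i j k, 0 ≤ T n i j k)
    (Tinf : I → I → I → ℝ)
    (hTconv : ∀ i j k, Tendsto (fun n => T n i j k) atTop (nhds (Tinf i j k)))
    (v : ℕ → I → ℝ) (vinf : I → ℝ)
    (hvconv : ∀ i, Tendsto (fun n => v n i) atTop (nhds (vinf i)))
    -- min_i v_i⁽ⁿ⁾ < 0 for every n
    (hvneg : ∀ n, ∃ i, v n i < 0)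
    -- t_n → +∞
    (t : ℕ → ℝ) (ht : Tendsto t atTop atTop)
    -- scal⁽ⁿ⁾(t_n) ≥ −K
    (K : ℝ)
    (hscal : ∀ n, -K ≤ (1 / 2) * ∑ i, d i * b n i * Real.exp (-(t n * v n i))
        - (1 / 4) * ∑ i, ∑ j, ∑ k, T n i j k * Real.exp (t n * (v n i - v n j - v n k))) :
    ∀ i j k, 0 < Tinf i j k →
      vinf i - vinf j - vinf k + (⨅ l, vinf l) ≤ 0 := by
  intro i j k hτ
  by_contra! hgap
  choose B hB using hb_bdd
  obtain ⟨l₀, hl₀⟩ :=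
    exists_nonpos_of_tendsto_of_frequently_exists_neg hvconv (Frequently.of_forall hvneg)
  have hm : ∀ l, ⨅ l, vinf l ≤ vinf l := ciInf_le (Set.finite_range vinf).bddBelow
  have hscal_atBot := tendsto_scalarCurvature_atBot (B := fun l => max (B l) 0)
    (fun l => (hd l).le) (fun n l => (hB l n).trans (le_max_left _ 0)) (fun l => le_max_right _ 0)
    hT0 (hTconv i j k) hτ hvconv ht hm ((hm l₀).trans hl₀) hgap
  obtain ⟨n, hn⟩ := (hscal_atBot.eventually_lt_atBot (-K)).exists
  exact (hscal n).not_gt hn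

/-- Consider, for each `n`, scalar curvature data `d_i > 0`,
`b_i⁽ⁿ⁾ ≥ 0` (bounded in `n`), `[ijk]⁽ⁿ⁾ ≥ 0` converging to `[ijk]⁽∞⁾`, and `v_i⁽ⁿ⁾`
converging to `v_i⁽∞⁾` with `min_i v_i⁽ⁿ⁾ < 0`.  If `t_n → +∞` and
`scal⁽ⁿ⁾(t_n) ≥ −K` for all `n`, then `[ijk]⁽∞⁾ > 0` implies
`v_i⁽∞⁾ − v_j⁽∞⁾ − v_k⁽∞⁾ + min_l v_l⁽∞⁾ ≤ 0`: the limit direction is a submersion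
direction. -/
theorem limit_direction_is_submersion_direction
    {I : Type*} [Fintype I] [Nonempty I]
    (d : I → ℝ) (hd : ∀ i, 0 < d i)
    (b : ℕ → I → ℝ) (hb0 : ∀ n i, 0 ≤ b n i)
    (hb_bdd : ∀ i, ∃ B : ℝ, ∀ n, b n i ≤ B)
    (T : ℕ → I → I → I → ℝ) (hT0 : ∀ n i j k, 0 ≤ T n i j k)
    (hTsymm₁ : ∀ n i j k, T n i j k = T n j i k)
    (hTsymm₂ : ∀ n i j k, T n i j k = T n i k j)
    (Tinf : I → I → I → ℝ)
    (hTconv : ∀ i j k, Tendsto (fun n => T n i j k) atTop (nhds (Tinf i j k)))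
    (v : ℕ → I → ℝ) (vinf : I → ℝ)
    (hvconv : ∀ i, Tendsto (fun n => v n i) atTop (nhds (vinf i)))
    -- min_i v_i⁽ⁿ⁾ < 0 for every n
    (hvneg : ∀ n, ∃ i, v n i < 0)
    -- t_n → +∞
    (t : ℕ → ℝ) (htpos : ∀ n, 0 < t n) (ht : Tendsto t atTop atTop)
    -- scal⁽ⁿ⁾(t_n) ≥ −K
    (K : ℝ) (hK : 0 ≤ K)
    (hscal : ∀ n, -K ≤ (1 / 2) * ∑ i, d i * b n i * Real.exp (-(t n * v n i))
        - (1 / 4) * ∑ i, ∑ j, ∑ k, T n i j k * Real.exp (t n * (v n i - v n j - v n k))) :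
    ∀ i j k, 0 < Tinf i j k →
      vinf i - vinf j - vinf k + (⨅ l, vinf l) ≤ 0 :=
  limit_direction_is_submersion_direction_general d hd b hb_bdd T hT0 Tinf hTconv v vinf hvconv
    hvneg t ht K hscal
end
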